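/- arXiv:1908.08598 — 2 statements merged into one kernel-verified Lean document; each statement's English description precedes it below -/
import Mathlib

section
/- Let θ ∈ (0, 1/2). For all (t,s) ∈ [θ, 1−θ] × [0,1], the Green's function G satisfies θ³·e(s) ≤ G(t,s) ≤ e(s), where e(s) = (1/6)s(1−s)². -/
open Set intervalIntegral Filter

noncomputable def G (t s : ℝ) : ℝ :=
  if s ≤ t then (t^3*(1-s)^2 - (t-s)^3)/6 else t^3*(1-s)^2/6

noncomputable def e (s : ℝ) : ℝ := s*(1-s)^2/6

noncomputable def H (α k : ℝ) {n : ℕ} (β η : Fin n → ℝ) (t s : ℝ) : ℝ :=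
  G t s + (α/k) * (∫ τ in (0:ℝ)..1, G τ s) + (1/k) * ∑ i, β i * G (η i) s

/-! Both bounds reduce, branch by branch, to elementary polynomial inequalities: for `s ≤ t`
the lower bound is `(t - s)³ ≤ (t(1 - s))³` and the upper bound is the factorisation
`6 (e s - G t s) = s (1 - t)² (t (2 - s) + 1 - 2s)`; for `t < s` both follow from
`t³ s ≤ t³ ≤ s`. In fact `t³ e s ≤ G t s` for every `t ∈ [0, 1]`, and `θ³ ≤ t³`. -/

lemma e_nonneg {s : ℝ} (hs : 0 ≤ s) : 0 ≤ e s := by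
  unfold e; positivity

lemma pow_three_mul_e_le_G {t s : ℝ} (ht₀ : 0 ≤ t) (ht₁ : t ≤ 1) (hs₀ : 0 ≤ s) (hs₁ : s ≤ 1) :
    t ^ 3 * e s ≤ G t s := by
  unfold G e
  split_ifs with hst
  · have hcube : (t - s) ^ 3 ≤ (t * (1 - s)) ^ 3 :=
      (Odd.pow_le_pow (by decide)).2 (by nlinarith)
    nlinarith
  · have : 0 ≤ t ^ 3 * (1 - s) ^ 2 * (1 - s) := by
      have := sub_nonneg.2 hs₁; positivity
    nlinarith

lemma G_le_e {t s : ℝ} (ht₀ : 0 ≤ t) (ht₁ : t ≤ 1) (hs₀ : 0 ≤ s) (hs₁ : s ≤ 1) :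
    G t s ≤ e s := by
  unfold G e
  split_ifs with hst
  · have hfactor : 0 ≤ s * (1 - t) ^ 2 * (t * (2 - s) + 1 - 2 * s) := by
      have : 0 ≤ t * (2 - s) + 1 - 2 * s := by nlinarith
      positivity
    nlinarith
  · have hcube : t ^ 3 ≤ s := (pow_le_of_le_one ht₀ ht₁ (by norm_num)).trans (le_of_not_ge hst)
    nlinarith [mul_le_mul_of_nonneg_right hcube (sq_nonneg (1 - s))]

theorem stmt3 (θ : ℝ) (hθ : θ ∈ Set.Ioo (0:ℝ) (1/2)) :
    ∀ t ∈ Set.Icc θ (1-θ), ∀ s ∈ Set.Icc (0:ℝ) 1,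
      θ^3 * e s ≤ G t s ∧ G t s ≤ e s := by
  rintro t ⟨hθt, htθ⟩ s ⟨hs₀, hs₁⟩
  have ht₀ : 0 ≤ t := hθ.1.le.trans hθt
  have ht₁ : t ≤ 1 := by linarith [hθ.1]
  refine ⟨?_, G_le_e ht₀ ht₁ hs₀ hs₁⟩
  calc θ ^ 3 * e s ≤ t ^ 3 * e s := by gcongr; exacts [e_nonneg hs₀, hθ.1.le]
    _ ≤ G t s := pow_three_mul_e_le_G ht₀ ht₁ hs₀ hs₁
end

section
/- For all t, s ∈ [0,1], H(t,s) ≤ (1/k)·e(s), where H(t,s) = G(t,s) + (α/k)∫₀¹ G(τ,s) dτ + (1/k)Σᵢ βᵢ G(ηᵢ,s), k = 1 − (α + Σᵢ βᵢ) > 0, α ≥ 0, βᵢ ≥ 0, ηᵢ ∈ (0,1), and e(s) = (1/6)s(1−s)². -/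
/-!
For each fixed `s ∈ [0,1]`, the Green's function `G(·, s)` is bounded by `e(s)` on `[0,1]`.
`H(t,s)` is a combination of values of `G(·, s)` on `[0,1]` (a point value, an average and the
values at the `ηᵢ`) with nonnegative weights `1`, `α/k` and `βᵢ/k`, and these weights add up to
`1 + (1 - k)/k = 1/k`.
-/

open Set intervalIntegral Filter

lemma G_le_e_s10 {t s : ℝ} (ht : t ∈ Icc (0:ℝ) 1) (hs : s ∈ Icc (0:ℝ) 1) : G t s ≤ e s := by
  obtain ⟨ht0, ht1⟩ := ht
  obtain ⟨hs0, hs1⟩ := hs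
  unfold G e
  split_ifs with hst
  · have hfactor : s*(1-s)^2 - (t^3*(1-s)^2 - (t-s)^3) = s*(1-t)^2*((2-s)*t + 1-2*s) := by ring
    have hlin : 0 ≤ (2-s)*t + 1-2*s := by nlinarith
    have : 0 ≤ s*(1-t)^2*((2-s)*t + 1-2*s) := by positivity
    linarith
  · have hcube : t^3 ≤ s := by nlinarith [pow_le_one₀ (n := 2) ht0 ht1, pow_nonneg ht0 2]
    gcongr

lemma continuous_G_left (s : ℝ) : Continuous fun τ => G τ s := by
  refine Continuous.if_le (by fun_prop) (by fun_prop) continuous_const continuous_id ?_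
  rintro τ rfl
  ring

lemma integral_G_le_e {s : ℝ} (hs : s ∈ Icc (0:ℝ) 1) : ∫ τ in (0:ℝ)..1, G τ s ≤ e s := by
  have hmono : ∫ τ in (0:ℝ)..1, G τ s ≤ ∫ _ in (0:ℝ)..1, e s :=
    integral_mono_on zero_le_one ((continuous_G_left s).intervalIntegrable 0 1)
      intervalIntegrable_const fun τ hτ => G_le_e_s10 hτ hs
  simpa using hmono

lemma add_div_mul_add_sum_le {ι : Type*} (S : Finset ι) {α k c x y : ℝ} {β z : ι → ℝ}
    (hα : 0 ≤ α) (hβ : ∀ i ∈ S, 0 ≤ β i) (hk : k = 1 - (α + ∑ i ∈ S, β i)) (hk0 : 0 < k)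
    (hx : x ≤ c) (hy : y ≤ c) (hz : ∀ i ∈ S, z i ≤ c) :
    x + (α/k) * y + (1/k) * ∑ i ∈ S, β i * z i ≤ (1/k) * c := by
  have hsum : ∑ i ∈ S, β i * z i ≤ (∑ i ∈ S, β i) * c := by
    rw [Finset.sum_mul]
    exact Finset.sum_le_sum fun i hi => mul_le_mul_of_nonneg_left (hz i hi) (hβ i hi)
  calc x + (α/k) * y + (1/k) * ∑ i ∈ S, β i * z i
      ≤ c + (α/k) * c + (1/k) * ((∑ i ∈ S, β i) * c) := by gcongr
    _ = (1/k) * c := by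
      field_simp
      linear_combination c * hk

theorem stmt10 (n : ℕ) (α : ℝ) (β η : Fin n → ℝ)
    (hα : 0 ≤ α) (hβ : ∀ i, 0 ≤ β i)
    (hη : ∀ i, η i ∈ Set.Ioo (0:ℝ) 1)
    (k : ℝ) (hk : k = 1 - (α + ∑ i, β i)) (hk0 : 0 < k) :
    ∀ t ∈ Set.Icc (0:ℝ) 1, ∀ s ∈ Set.Icc (0:ℝ) 1,
      H α k β η t s ≤ (1/k) * e s := by
  intro t ht s hs
  exact add_div_mul_add_sum_le Finset.univ hα (fun i _ => hβ i) hk hk0 (G_le_e_s10 ht hs)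
    (integral_G_le_e hs) fun i _ => G_le_e_s10 (Ioo_subset_Icc_self (hη i)) hs
end
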